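/- For every n ≥ 1, the number of planar binary trees with n leaves whose internal nodes are labeled by elements of the two-element set {≺, ≻}, subject to the restrictions that (i) the only allowed left-growth pattern is (≻, ≻) — i.e., whenever the left child w of an internal node v is itself an internal node, both v and w are labeled ≻ — and (ii) there is no internal node v whose left child w is internal and whose left child's left child is also internal (no two consecutive left-growth steps), equals the n-th Catalan number C_n = (1/(n+1))·binom(2n, n). (These labeled trees are the normal monomials for the Chen–Wang Gröbner–Shirshov basis of the nonsymmetric dendriform operad with respect to the order of operations ≻ < ≺.) -/

import Mathlib

/-- Operation labels `≺` (prec) and `≻` (succ). -/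
inductive DendOp where
  | prec
  | succ
deriving DecidableEq

/-- Planar (full) binary trees with internal nodes labeled by `L` and unlabeled leaves. -/
inductive PBTree (L : Type) where
  | leaf : PBTree L
  | node : L → PBTree L → PBTree L → PBTree L

/-- Number of leaves of a planar binary tree. -/
def PBTree.leaves {L : Type} : PBTree L → ℕ
  | .leaf => 1
  | .node _ l r => l.leaves + r.leaves

/-- `t` is a leaf. -/
def PBTree.isLeaf {L : Type} : PBTree L → Prop
  | .leaf => True
  | .node _ _ _ => False

/-- Chen–Wang normality: the only allowed left-growth pattern is `(≻, ≻)`, and there are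
no two consecutive left-growth steps (no internal node whose left child is internal and
whose left child's left child is also internal). -/
def PBTree.normalCW : PBTree DendOp → Prop
  | .leaf => True
  | .node _ .leaf r => r.normalCW
  | .node op (.node q a b) r =>
      op = DendOp.succ ∧ q = DendOp.succ ∧ a.isLeaf ∧
        (PBTree.node q a b).normalCW ∧ r.normalCW

/-! A normal tree is a leaf, `≺` or `≻` applied to a leaf and a normal tree `r`, or
`≻(≻(leaf, b), r)` with `b` and `r` normal. Sending these shapes to the one-node binary tree,
`node ∅ r`, `node r ∅` and `node b r` (children encoded recursively) is a bijection from normal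
trees onto nonempty binary trees that turns leaves into nodes, and binary trees with `n` nodes
are counted by `catalan n`. -/

namespace PBTree

def toBinaryTree : PBTree DendOp → BinaryTree Unit
  | leaf => .node () .nil .nil
  | node .prec _ r => .node () .nil r.toBinaryTree
  | node .succ leaf r => .node () r.toBinaryTree .nil
  | node .succ (node _ _ b) r => .node () b.toBinaryTree r.toBinaryTree

def ofBinaryTree : BinaryTree Unit → PBTree DendOp
  | .nil => leaf
  | .node _ .nil .nil => leaf
  | .node _ .nil r@(.node ..) => node .prec leaf (ofBinaryTree r)
  | .node _ l@(.node ..) .nil => node .succ leaf (ofBinaryTree l)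
  | .node _ l@(.node ..) r@(.node ..) =>
      node .succ (node .succ leaf (ofBinaryTree l)) (ofBinaryTree r)

theorem exists_toBinaryTree_eq_node (t : PBTree DendOp) :
    ∃ l r, t.toBinaryTree = .node () l r := by
  fun_cases toBinaryTree t <;> simp

theorem ofBinaryTree_toBinaryTree {t : PBTree DendOp} (ht : t.normalCW) :
    ofBinaryTree t.toBinaryTree = t := by
  induction t using toBinaryTree.induct with
  | case1 => simp [toBinaryTree, ofBinaryTree]
  | case2 a r ih =>
    cases a with
    | leaf =>
      obtain ⟨l, r', hr⟩ := exists_toBinaryTree_eq_node r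
      simp_all [normalCW, toBinaryTree, ofBinaryTree]
    | node => simp [normalCW] at ht
  | case3 r ih =>
    obtain ⟨l, r', hr⟩ := exists_toBinaryTree_eq_node r
    simp_all [normalCW, toBinaryTree, ofBinaryTree]
  | case4 q a b r ihb ihr =>
    obtain ⟨-, rfl, ha, hb, hr⟩ := ht
    cases a with
    | leaf =>
      obtain ⟨l, r', hr'⟩ := exists_toBinaryTree_eq_node r
      obtain ⟨l', r'', hb'⟩ := exists_toBinaryTree_eq_node b
      simp_all [normalCW, toBinaryTree, ofBinaryTree]
    | node => simp [isLeaf] at ha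

theorem numNodes_toBinaryTree {t : PBTree DendOp} (ht : t.normalCW) :
    t.toBinaryTree.numNodes = t.leaves := by
  induction t using toBinaryTree.induct with
  | case1 => rfl
  | case2 a r ih =>
    cases a with
    | leaf => simp_all [normalCW, toBinaryTree, leaves]; omega
    | node => simp [normalCW] at ht
  | case3 r ih => simp_all [normalCW, toBinaryTree, leaves]; omega
  | case4 q a b r ihb ihr =>
    obtain ⟨-, -, ha, hb, hr⟩ := ht
    cases a with
    | leaf => simp_all [normalCW, toBinaryTree, leaves]; omega
    | node => simp [isLeaf] at ha

theorem normalCW_ofBinaryTree (u : BinaryTree Unit) : (ofBinaryTree u).normalCW := by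
  induction u using ofBinaryTree.induct <;> simp_all [ofBinaryTree, normalCW, isLeaf]

theorem toBinaryTree_ofBinaryTree {u : BinaryTree Unit} (hu : u ≠ .nil) :
    (ofBinaryTree u).toBinaryTree = u := by
  induction u using ofBinaryTree.induct <;> simp_all [ofBinaryTree, toBinaryTree]

theorem bijOn_toBinaryTree {n : ℕ} (hn : 1 ≤ n) :
    Set.BijOn toBinaryTree {t | t.leaves = n ∧ t.normalCW} (BinaryTree.treesOfNumNodesEq n) := by
  refine ⟨?_, ?_, ?_⟩
  · rintro t ⟨rfl, ht⟩
    simpa using numNodes_toBinaryTree ht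
  · rintro s ⟨-, hs⟩ t ⟨-, ht⟩ h
    rw [← ofBinaryTree_toBinaryTree hs, ← ofBinaryTree_toBinaryTree ht, h]
  · intro u hu
    rw [Finset.mem_coe, BinaryTree.mem_treesOfNumNodesEq] at hu
    have hu_ne : u ≠ .nil := by rintro rfl; simp at hu; omega
    refine ⟨ofBinaryTree u, ⟨?_, normalCW_ofBinaryTree u⟩, toBinaryTree_ofBinaryTree hu_ne⟩
    rw [← numNodes_toBinaryTree (normalCW_ofBinaryTree u), toBinaryTree_ofBinaryTree hu_ne, hu]

end PBTree

/-- the number of `{≺,≻}`-labeled planar binary trees with `n` leaves whose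
only left-growth pattern is `(≻,≻)` and with no two consecutive left-growth steps equals
the `n`-th Catalan number `C n = binom(2n, n)/(n+1)`. -/
theorem count_chen_wang_normal_trees (n : ℕ) (hn : 1 ≤ n) :
    {t : PBTree DendOp | t.leaves = n ∧ t.normalCW}.ncard =
      (2 * n).choose n / (n + 1) := by
  rw [(PBTree.bijOn_toBinaryTree hn).ncard_eq, Set.ncard_coe_finset,
    BinaryTree.treesOfNumNodesEq_card_eq_catalan, catalan_eq_centralBinom_div, Nat.centralBinom]
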